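/- arXiv:1501.00912 — 2 statements merged into one kernel-verified Lean document; each statement's English description precedes it below -/
import Mathlib

section
/- Let B be a normal band, let a, x, y ∈ B with a ≼ x and a ≼ y (a lies 𝒥-below both x and y), and suppose (x,y) is a basic pair. Then (xax, yay) is a basic pair, and (xax)·(yay) = (xy)·a·(xy). (In terms of the strong semilattice decomposition, with x ∈ B_β, y ∈ B_γ, a ∈ B_α and α ≤ β, γ, this says (xφ_{β,α})·(yφ_{γ,α}) = (xy)φ_{δ,α}, where δ = min(β,γ).) -/
/-! Common definitions: free idempotent generated semigroups over bands,
generalised Green's relations, and abundancy notions. -/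

/-- `(e, f)` is a *basic pair* if `ef ∈ {e,f}` or `fe ∈ {e,f}`. -/
def basicPair {B : Type*} [Mul B] (e f : B) : Prop :=
  e * f = e ∨ e * f = f ∨ f * e = e ∨ f * e = f

/-- The defining congruence of the free idempotent generated semigroup `IG B`:
the congruence on the free semigroup on `{ē : e ∈ B}` generated by the relations
`ē f̄ = (ef)‾` for basic pairs `(e, f)`. -/
def igCon (B : Type*) [Semigroup B] : Con (FreeSemigroup B) :=
  conGen fun w₁ w₂ => ∃ e f : B, basicPair e f ∧
    w₁ = FreeSemigroup.of e * FreeSemigroup.of f ∧ w₂ = FreeSemigroup.of (e * f)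

/-- The free idempotent generated semigroup over a band `B`. -/
abbrev IG (B : Type*) [Semigroup B] := (igCon B).Quotient

/-- The canonical generator `ē` of `IG B`. -/
def igOf {B : Type*} [Semigroup B] (e : B) : IG B :=
  ((FreeSemigroup.of e : FreeSemigroup B) : (igCon B).Quotient)

/-- `prodSeq x a b = x a * x (a+1) * ⋯ * x b` (it is `x a` when `b ≤ a`). -/
def prodSeq {M : Type*} [Mul M] (x : ℕ → M) (a b : ℕ) : M :=
  (List.range (b - a)).foldl (fun acc i => acc * x (a + i + 1)) (x a)

/-- The word `x̄_a x̄_{a+1} ⋯ x̄_b` in the free semigroup on `{ē : e ∈ B}`. -/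
def freeWord {B : Type*} (x : ℕ → B) (a b : ℕ) : FreeSemigroup B :=
  prodSeq (fun i => FreeSemigroup.of (x i)) a b

/-- The element `x̄_a x̄_{a+1} ⋯ x̄_b` of `IG B`. -/
def igWord {B : Type*} [Semigroup B] (x : ℕ → B) (a b : ℕ) : IG B :=
  ((freeWord x a b : FreeSemigroup B) : (igCon B).Quotient)

/-- Green's relation `𝓡`: `a 𝓡 b` iff `a = b` or `as = b`, `bt = a` for some `s, t`. -/
def GreenR {S : Type*} [Semigroup S] (a b : S) : Prop :=
  a = b ∨ ∃ s t : S, a * s = b ∧ b * t = a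

/-- Green's relation `𝓛`: `a 𝓛 b` iff `a = b` or `sa = b`, `tb = a` for some `s, t`. -/
def GreenL {S : Type*} [Semigroup S] (a b : S) : Prop :=
  a = b ∨ ∃ s t : S, s * a = b ∧ t * b = a

/-- `a 𝓡* b` iff for all `x, y ∈ S¹`, `xa = ya ↔ xb = yb`. -/
def RStar {S : Type*} [Semigroup S] (a b : S) : Prop :=
  ∀ x y : WithOne S,
    x * (a : WithOne S) = y * (a : WithOne S) ↔ x * (b : WithOne S) = y * (b : WithOne S)

/-- `a 𝓛* b` iff for all `x, y ∈ S¹`, `ax = ay ↔ bx = by`. -/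
def LStar {S : Type*} [Semigroup S] (a b : S) : Prop :=
  ∀ x y : WithOne S,
    (a : WithOne S) * x = (a : WithOne S) * y ↔ (b : WithOne S) * x = (b : WithOne S) * y

/-- `a 𝓡̃ b` iff for every idempotent `e`, `ea = a ↔ eb = b`. -/
def RTilde {S : Type*} [Semigroup S] (a b : S) : Prop :=
  ∀ e : S, IsIdempotentElem e → (e * a = a ↔ e * b = b)

/-- `a 𝓛̃ b` iff for every idempotent `e`, `ae = a ↔ be = b`. -/
def LTilde {S : Type*} [Semigroup S] (a b : S) : Prop :=
  ∀ e : S, IsIdempotentElem e → (a * e = a ↔ b * e = b)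

/-- A semigroup is *abundant* if every `𝓡*`-class and every `𝓛*`-class
contains an idempotent. -/
def Abundant (S : Type*) [Semigroup S] : Prop :=
  ∀ a : S, (∃ e : S, IsIdempotentElem e ∧ RStar a e) ∧
    (∃ e : S, IsIdempotentElem e ∧ LStar a e)

/-- A semigroup is *weakly abundant* if every `𝓡̃`-class and every `𝓛̃`-class
contains an idempotent. -/
def WeaklyAbundant (S : Type*) [Semigroup S] : Prop :=
  ∀ a : S, (∃ e : S, IsIdempotentElem e ∧ RTilde a e) ∧
    (∃ e : S, IsIdempotentElem e ∧ LTilde a e)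

/-- On a band, `x` and `y` are `𝒟`-equivalent iff `xyx = x` and `yxy = y`. -/
def dEquiv {B : Type*} [Mul B] (x y : B) : Prop :=
  x * y * x = x ∧ y * x * y = y

/-- On a band, `x` and `y` are `𝒥`-incomparable iff `xyx ≠ x` and `yxy ≠ y`. -/
def jIncomp {B : Type*} [Mul B] (x y : B) : Prop :=
  x * y * x ≠ x ∧ y * x * y ≠ y

/-- One step of the reduction system induced by the presentation of `IG B`:
replace a factor `ē f̄`, with `(e,f)` a basic pair, by `(ef)‾`. -/
def RedStep {B : Type*} [Semigroup B] (w w' : FreeSemigroup B) : Prop :=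
  ∃ (p q : List B) (e f : B), basicPair e f ∧
    w.head :: w.tail = p ++ e :: f :: q ∧
    w'.head :: w'.tail = p ++ (e * f) :: q

/-- A word is in *normal form* (irreducible) if no reduction step applies. -/
def IsNF {B : Type*} [Semigroup B] (w : FreeSemigroup B) : Prop :=
  ∀ w', ¬ RedStep w w'

/-- `x̄₁ ⋯ x̄ₙ` (letters `x 1, …, x n`) is in *almost normal form* witnessed by
block boundaries `idx 0 = 0 < idx 1 < ⋯ < idx r = n`: within each block all
letters are `𝒟`-equivalent, and letters in adjacent blocks are incomparable. -/
def AlmostNF {B : Type*} [Mul B] (x : ℕ → B) (n r : ℕ) (idx : ℕ → ℕ) : Prop :=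
  1 ≤ r ∧ idx 0 = 0 ∧ idx r = n ∧
  (∀ k < r, idx k < idx (k + 1)) ∧
  (∀ k < r, ∀ p q : ℕ, idx k < p → p ≤ idx (k + 1) → idx k < q → q ≤ idx (k + 1) →
    dEquiv (x p) (x q)) ∧
  (∀ k : ℕ, k + 1 < r → ∀ p q : ℕ, idx k < p → p ≤ idx (k + 1) →
    idx (k + 1) < q → q ≤ idx (k + 2) → jIncomp (x p) (x q))

/-- Condition (P) for `IG B`. -/
def CondP (B : Type*) [Semigroup B] : Prop :=
  ∀ (n m r : ℕ) (u v : ℕ → B) (iu iv : ℕ → ℕ),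
    AlmostNF u n r iu → AlmostNF v m r iv →
    igWord u 1 n = igWord v 1 m →
    ((∀ s : ℕ, 1 ≤ s → s ≤ r →
        (u (iu s) * v (iv s) = u (iu s) ∧ v (iv s) * u (iu s) = v (iv s)) →
        igWord u 1 (iu s) = igWord v 1 (iv s)) ∧
      (∀ t : ℕ, t + 1 ≤ r →
        (u (iu t + 1) * v (iv t + 1) = v (iv t + 1) ∧
          v (iv t + 1) * u (iu t + 1) = u (iu t + 1)) →
        igWord u (iu t + 1) n = igWord v (iv t + 1) m))

/-- A normal band is *pliant* if for every `𝒟`-class `D` there is `c ∈ D` with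
`u e u = c` for every `e ∈ D` and every `u` strictly `𝒥`-above `D`. -/
def Pliant (B : Type*) [Mul B] : Prop :=
  ∀ d : B, ∃ c : B, dEquiv c d ∧
    ∀ e u : B, dEquiv e d → (e * u * e = e ∧ u * e * u ≠ u) → u * e * u = c

/-- Key computation: if `a ≼ y` in a normal band, then
`(xax)(yay) = (xy)a(xy)`. -/
lemma normal_band_key {B : Type*} [Semigroup B] (hband : ∀ x : B, x * x = x)
    (hnormal : ∀ p q r : B, p * q * r * p = p * r * q * p)
    (a x y : B) (hay : a * y * a = a) :
    (x * a * x) * (y * a * y) = (x * y) * a * (x * y) := by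
  have hL : (x * a * x) * (y * a * y) = x * a * y := by
    have h1 : (x * a * x) * (y * a * y) = x * (a * x * y * a) * y := by
      simp only [mul_assoc]
    rw [h1, hnormal a x y]
    have h2 : x * (a * y * x * a) * y = (x * a * y) * (x * a * y) := by
      simp only [mul_assoc]
    rw [h2, hband]
  have hband' : ∀ z t : B, z * (z * t) = z * t := by
    intro z t; rw [← mul_assoc, hband]
  have hR : (x * y) * a * (x * y) = x * a * y := by
    conv_lhs => rw [show a = a * y * a from hay.symm]
    have h1 : (x * y) * (a * y * a) * (x * y) = x * (y * a * (y * a * x) * y) := by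
      simp only [mul_assoc]
    rw [h1, hnormal y a (y * a * x)]
    have h2 : x * (y * (y * a * x) * a * y) = x * y * a * x * a * y := by
      simp only [mul_assoc, hband']
    rw [h2, hnormal x y a]
    have h3 : x * a * y * x * a * y = (x * a * y) * (x * a * y) := by
      simp only [mul_assoc]
    rw [h3, hband]
  rw [hL, hR]

/-- Let `B` be a normal band, `a, x, y ∈ B` with `a` lying
`𝒥`-below `x` and `y`, and `(x, y)` a basic pair. Then `(xax, yay)` is a basic
pair and `(xax)(yay) = (xy) a (xy)`. -/
theorem normal_band_basic_transfer
    {B : Type*} [Semigroup B] (hband : ∀ x : B, x * x = x)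
    (hnormal : ∀ p q r : B, p * q * r * p = p * r * q * p)
    (a x y : B) (hax : a * x * a = a) (hay : a * y * a = a)
    (hxy : basicPair x y) :
    basicPair (x * a * x) (y * a * y) ∧
      (x * a * x) * (y * a * y) = (x * y) * a * (x * y) := by
  have h1 := normal_band_key hband hnormal a x y hay
  have h2 := normal_band_key hband hnormal a y x hax
  refine ⟨?_, h1⟩
  rcases hxy with h | h | h | h
  · exact Or.inl (by rw [h1, h])
  · exact Or.inr (Or.inl (by rw [h1, h]))
  · exact Or.inr (Or.inr (Or.inl (by rw [h2, h])))
  · exact Or.inr (Or.inr (Or.inr (by rw [h2, h])))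
end

section
/- Let B be a normal band and let x₁, …, xₙ, y₁, …, y_m ∈ B all be pairwise 𝒟-equivalent, lying in the single 𝒟-class B_α of B (a rectangular sub-band of B). Then x̄₁⋯x̄ₙ = ȳ₁⋯ȳ_m in IG(B_α) if and only if x̄₁⋯x̄ₙ = ȳ₁⋯ȳ_m in IG(B). -/
/-! The inclusion `C ⊆ B` maps basic pairs to basic pairs, so it induces `IG C → IG B`.
Conversely, in a normal band the elements `u` with `a ≼ u` form a subsemigroup on which
`u ↦ u a u` is a homomorphism onto the `𝒟`-class `C` of `a`, fixing `C`. Sending every other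
element to `0` then respects the defining relations of `IG B`, giving a map `IG B → (IG C)⁰`
which is the identity on words over `C`. -/

class IsNormalBand (B : Type*) [Semigroup B] : Prop where
  mul_self (x : B) : x * x = x
  normal (p q r : B) : p * q * r * p = p * r * q * p

theorem prodSeq_map {M N : Type*} [Mul M] [Mul N] {f : M → N}
    (hf : ∀ p q : M, f (p * q) = f p * f q) (x : ℕ → M) (i j : ℕ) :
    f (prodSeq x i j) = prodSeq (fun k => f (x k)) i j := by
  unfold prodSeq
  induction j - i with
  | zero => rfl
  | succ k ih => rw [List.range_succ, List.foldl_append, List.foldl_append, List.foldl_cons,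
      List.foldl_cons, List.foldl_nil, List.foldl_nil, hf, ih]

theorem basicPair.map {α β : Type*} [Mul α] [Mul β] {φ : α → β} {e f : α}
    (hef : φ e * φ f = φ (e * f)) (hfe : φ f * φ e = φ (f * e)) (h : basicPair e f) :
    basicPair (φ e) (φ f) := by
  rcases h with h | h | h | h
  · exact Or.inl (by rw [hef, h])
  · exact Or.inr (Or.inl (by rw [hef, h]))
  · exact Or.inr (Or.inr (Or.inl (by rw [hfe, h])))
  · exact Or.inr (Or.inr (Or.inr (by rw [hfe, h])))

theorem Subsemigroup.basicPair_coe_iff {B : Type*} [Mul B] {C : Subsemigroup B} {c d : C} :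
    basicPair (c : B) (d : B) ↔ basicPair c d := by
  simp only [basicPair, Subtype.ext_iff, MulMemClass.coe_mul]

section IG

variable {B : Type*} [Semigroup B]

theorem igOf_mul_igOf {e f : B} (h : basicPair e f) : igOf e * igOf f = igOf (e * f) :=
  (Con.eq _).2 (ConGen.Rel.of _ _ ⟨e, f, h, rfl, rfl⟩)

theorem igWord_eq_prodSeq (x : ℕ → B) (i j : ℕ) :
    igWord x i j = prodSeq (fun k => igOf (x k)) i j :=
  prodSeq_map (fun _ _ => rfl) _ i j

theorem prodSeq_eq_of_igWord_eq {N : Type*} [Semigroup N] (g : B → N)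
    (hg : ∀ e f : B, basicPair e f → g e * g f = g (e * f)) {x y : ℕ → B} {i j k l : ℕ}
    (h : igWord x i j = igWord y k l) :
    prodSeq (fun n => g (x n)) i j = prodSeq (fun n => g (y n)) k l := by
  have hker : igCon B ≤ Con.ker (FreeSemigroup.lift g) :=
    Con.conGen_le.2 fun _ _ ⟨e, f, hb, h₁, h₂⟩ => by
      simp only [Con.ker_rel, h₁, h₂, map_mul, FreeSemigroup.lift_of, hg e f hb]
  have := hker ((Con.eq _).1 h)
  rwa [Con.ker_rel, freeWord, freeWord, prodSeq_map (map_mul _), prodSeq_map (map_mul _)] at this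

theorem Subsemigroup.igWord_coe_eq_of_eq {C : Subsemigroup B} {x y : ℕ → C} {i j k l : ℕ}
    (h : igWord x i j = igWord y k l) :
    igWord (fun n => (x n : B)) i j = igWord (fun n => (y n : B)) k l := by
  rw [igWord_eq_prodSeq, igWord_eq_prodSeq]
  exact prodSeq_eq_of_igWord_eq (fun c : C => igOf (c : B))
    (fun _ _ hb => igOf_mul_igOf (Subsemigroup.basicPair_coe_iff.2 hb)) h

end IG

theorem dEquiv_mul_mul_self {B : Type*} [Semigroup B] {a u : B} (hu : a * u * a = a) :
    dEquiv (u * a * u) a := by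
  constructor
  · calc u * a * u * a * (u * a * u) = u * (a * u * a) * (u * a * u) := by simp only [mul_assoc]
      _ = u * a * (u * a * u) := by rw [hu]
      _ = u * (a * u * a) * u := by simp only [mul_assoc]
      _ = u * a * u := by rw [hu]
  · calc a * (u * a * u) * a = a * u * a * u * a := by simp only [mul_assoc]
      _ = a := by rw [hu, hu]

namespace IsNormalBand

variable {B : Type*} [Semigroup B] [IsNormalBand B] {a u v : B}

theorem mul_mul_mul_mul_absorb (a u v : B) : a * u * a * v * a = a * u * v * a :=
  calc a * u * a * v * a = a * u * (a * v) * a := by rw [mul_assoc (a * u) a v]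
    _ = a * (a * v) * u * a := normal a u (a * v)
    _ = a * v * u * a := by rw [← mul_assoc a a v, mul_self a]
    _ = a * u * v * a := normal a v u

theorem mul_mul_mul_eq_self_iff : a * (u * v) * a = a ↔ a * u * a = a ∧ a * v * a = a := by
  refine ⟨fun h => ⟨?_, ?_⟩, fun ⟨hu, hv⟩ => ?_⟩
  · calc a * u * a = a * u * (a * (u * v) * a) := by rw [h]
      _ = a * u * a * (u * v) * a := by simp only [mul_assoc]
      _ = a * u * (u * v) * a := mul_mul_mul_mul_absorb a u (u * v)
      _ = a * (u * u) * v * a := by simp only [mul_assoc]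
      _ = a := by rw [mul_self, mul_assoc a u v, h]
  · calc a * v * a = a * (u * v) * a * v * a := by rw [h]
      _ = a * (u * v) * v * a := mul_mul_mul_mul_absorb a (u * v) v
      _ = a * (u * (v * v)) * a := by simp only [mul_assoc]
      _ = a := by rw [mul_self, h]
  · calc a * (u * v) * a = a * u * a * v * a := by rw [mul_mul_mul_mul_absorb, mul_assoc a u v]
      _ = a := by rw [hu, hv]

theorem mul_mul_self_mul (hv : a * v * a = a) : u * a * u * v = u * a * v :=
  calc u * a * u * v = u * (a * v * a) * u * v := by rw [hv]
    _ = u * a * (v * a * u * v) := by simp only [mul_assoc]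
    _ = u * a * (v * u * a * v) := by rw [normal v a u]
    _ = u * a * v * (u * a * v) := by simp only [mul_assoc]
    _ = u * a * v := mul_self _

/-- The map `u ↦ u a u` is multiplicative as soon as `a ≼ v`. -/
theorem mul_mul_self_mul_mul_mul_self (hv : a * v * a = a) :
    u * a * u * (v * a * v) = u * v * a * (u * v) :=
  calc u * a * u * (v * a * v) = u * a * u * v * (a * v) := by simp only [mul_assoc]
    _ = u * (a * v * a) * v := by rw [mul_mul_self_mul hv]; simp only [mul_assoc]
    _ = u * a * u * v := by rw [hv, mul_mul_self_mul hv]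
    _ = u * a * ((u * v) * (u * v)) := by rw [mul_self (u * v)]; simp only [mul_assoc]
    _ = u * a * v * u * v := by rw [← mul_mul_self_mul hv]; simp only [mul_assoc]
    _ = u * v * a * (u * v) := by rw [normal u a v]; simp only [mul_assoc]

end IsNormalBand

section Retraction

variable {B : Type*} [Semigroup B] {C : Subsemigroup B} {a : B}

open Classical in
noncomputable def igRetract (hC : ∀ z : B, z ∈ C ↔ dEquiv z a) (u : B) : WithZero (IG C) :=
  if hu : a * u * a = a then (igOf ⟨u * a * u, (hC _).2 (dEquiv_mul_mul_self hu)⟩ : IG C) else 0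

theorem igRetract_coe (hC : ∀ z : B, z ∈ C ↔ dEquiv z a) (z : C) :
    igRetract hC z = igOf z := by
  have hz := (hC z).1 z.2
  rw [igRetract, dif_pos hz.2]
  exact congrArg _ (congrArg _ (Subtype.ext hz.1))

theorem igRetract_mul [IsNormalBand B] (hC : ∀ z : B, z ∈ C ↔ dEquiv z a) {e f : B}
    (hb : basicPair e f) : igRetract hC e * igRetract hC f = igRetract hC (e * f) := by
  open IsNormalBand in
  unfold igRetract
  by_cases he : a * e * a = a
  · by_cases hf : a * f * a = a
    · rw [dif_pos he, dif_pos hf, dif_pos (mul_mul_mul_eq_self_iff.2 ⟨he, hf⟩),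
        ← WithZero.coe_mul, igOf_mul_igOf]
      · exact congrArg _ (congrArg _ (Subtype.ext (mul_mul_self_mul_mul_mul_self hf)))
      · exact Subsemigroup.basicPair_coe_iff.1 <| hb.map (φ := fun u => u * a * u)
          (mul_mul_self_mul_mul_mul_self hf) (mul_mul_self_mul_mul_mul_self he)
    · rw [dif_neg hf, dif_neg fun h => hf (mul_mul_mul_eq_self_iff.1 h).2, mul_zero]
  · rw [dif_neg he, dif_neg fun h => he (mul_mul_mul_eq_self_iff.1 h).1, zero_mul]

end Retraction

theorem IG_normal_band_Dclass_words_general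
    {B : Type*} [Semigroup B] (hband : ∀ x : B, x * x = x)
    (hnormal : ∀ p q r : B, p * q * r * p = p * r * q * p)
    (C : Subsemigroup B) (a : B)
    (hC : ∀ z : B, z ∈ C ↔ dEquiv z a)
    (n m : ℕ) (x y : ℕ → C) :
    igWord x 1 n = igWord y 1 m ↔
      igWord (fun i => (x i : B)) 1 n = igWord (fun i => (y i : B)) 1 m := by
  have : IsNormalBand B := ⟨hband, hnormal⟩
  refine ⟨Subsemigroup.igWord_coe_eq_of_eq, fun h => ?_⟩
  have h' := prodSeq_eq_of_igWord_eq (igRetract hC) (fun _ _ => igRetract_mul hC) h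
  simp only [igRetract_coe] at h'
  rw [← prodSeq_map WithZero.coe_mul, ← prodSeq_map WithZero.coe_mul, ← igWord_eq_prodSeq,
    ← igWord_eq_prodSeq] at h'
  exact WithZero.coe_inj.1 h'

/-- Let `B` be a normal band and let `C` be a `𝒟`-class of
`B` (a rectangular sub-band). For words with all letters in `C`, equality in
`IG C` is equivalent to equality in `IG B`. -/
theorem IG_normal_band_Dclass_words
    {B : Type*} [Semigroup B] (hband : ∀ x : B, x * x = x)
    (hnormal : ∀ p q r : B, p * q * r * p = p * r * q * p)
    (C : Subsemigroup B) (a : B) (ha : a ∈ C)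
    (hC : ∀ z : B, z ∈ C ↔ dEquiv z a)
    (n m : ℕ) (hn : 1 ≤ n) (hm : 1 ≤ m) (x y : ℕ → C) :
    igWord x 1 n = igWord y 1 m ↔
      igWord (fun i => (x i : B)) 1 n = igWord (fun i => (y i : B)) 1 m :=
  IG_normal_band_Dclass_words_general hband hnormal C a hC n m x y
end
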